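/- Let B be a simple bipartite graph with bipartition V(B) = W ⊎ U, G its half-square, D = (T, β_D) a nice tree decomposition of B, and D' = (T, β_{D'}) the derived decomposition of G. Let s ∈ U and let t be a node of T that is an introduce(s) node of D, with unique child t'. Then Original(t) = Original(t') and Fake(t) = Fake(t'). -/

import Mathlib

open SimpleGraph

section Defs

variable {V : Type*} {ι : Type*}

/-- `W, U` is a bipartition of the simple graph `B`. -/
def IsBipartition (B : SimpleGraph V) (W U : Set V) : Prop :=
  (∀ v, v ∈ W ∨ v ∈ U) ∧ (∀ v, ¬(v ∈ W ∧ v ∈ U)) ∧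
    ∀ ⦃a b⦄, B.Adj a b → (a ∈ W ∧ b ∈ U) ∨ (a ∈ U ∧ b ∈ W)

/-- The half-square of `B` on side `W`: two distinct vertices of `W` are adjacent
iff they have a common neighbor in `B`. -/
def halfSquare (B : SimpleGraph V) (W : Set V) : SimpleGraph V where
  Adj a b := a ≠ b ∧ a ∈ W ∧ b ∈ W ∧ ∃ s, B.Adj a s ∧ B.Adj b s
  symm := by
    constructor
    rintro a b ⟨hne, ha, hb, s, h1, h2⟩
    exact ⟨hne.symm, hb, ha, s, h2, h1⟩
  loopless := by constructor; rintro a ⟨hne, _⟩; exact hne rfl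

/-- Tree decomposition of the graph `H` with vertex set `S`, over the tree `T`. -/
structure IsTreeDecompOn (H : SimpleGraph V) (S : Set V) (T : SimpleGraph ι)
    (β : ι → Set V) : Prop where
  covers : ∀ v ∈ S, ∃ t, v ∈ β t
  edge_mem : ∀ ⦃u v⦄, H.Adj u v → ∃ t, u ∈ β t ∧ v ∈ β t
  conn : ∀ v ∈ S, (T.induce {t | v ∈ β t}).Connected

/-- `t'` is a descendant of `t` (inclusively) in the tree `T` rooted at `r`:
`t` lies on every path from `t'` to the root. -/
def Desc (T : SimpleGraph ι) (r : ι) (t t' : ι) : Prop :=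
  ∀ p : T.Walk t' r, p.IsPath → t ∈ p.support

/-- `γ(t)`: union of the bags of `t` and of all its descendants. -/
def gammaSet (T : SimpleGraph ι) (r : ι) (β : ι → Set V) (t : ι) : Set V :=
  ⋃ t' ∈ {t' | Desc T r t t'}, β t'

/-- The bag of the derived decomposition. -/
def derivedBag (B : SimpleGraph V) (W U : Set V) (T : SimpleGraph ι) (r : ι)
    (β : ι → Set V) (t : ι) : Set V :=
  (β t ∩ W) ∪ ⋃ s ∈ β t ∩ U, B.neighborSet s ∩ gammaSet T r β t

def originalSet (B : SimpleGraph V) (W U : Set V) (T : SimpleGraph ι) (r : ι)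
    (β : ι → Set V) (t : ι) : Set V :=
  β t ∩ derivedBag B W U T r β t

def fakeSet (B : SimpleGraph V) (W U : Set V) (T : SimpleGraph ι) (r : ι)
    (β : ι → Set V) (t : ι) : Set V :=
  derivedBag B W U T r β t \ β t

def cliquesAt (B : SimpleGraph V) (U : Set V) (β : ι → Set V) (t : ι) : Set (Set V) :=
  {K | ∃ s ∈ β t ∩ U, K = B.neighborSet s}

def IsChild (T : SimpleGraph ι) (r : ι) (t t' : ι) : Prop :=
  T.Adj t t' ∧ Desc T r t t'

def IsLeafNode (T : SimpleGraph ι) (r : ι) (β : ι → Set V) (t : ι) : Prop :=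
  (∀ t', ¬ IsChild T r t t') ∧ β t = ∅

def IsForgetNode (T : SimpleGraph ι) (r : ι) (β : ι → Set V) (w : V) (t : ι) : Prop :=
  ∃ t', IsChild T r t t' ∧ (∀ t'', IsChild T r t t'' → t'' = t') ∧
    w ∈ β t' ∧ β t = β t' \ {w}

def IsIntroduceNode (T : SimpleGraph ι) (r : ι) (β : ι → Set V) (w : V) (t : ι) : Prop :=
  ∃ t', IsChild T r t t' ∧ (∀ t'', IsChild T r t t'' → t'' = t') ∧
    w ∈ β t ∧ β t \ {w} = β t'

def IsJoinNode (T : SimpleGraph ι) (r : ι) (β : ι → Set V) (t : ι) : Prop :=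
  ∃ t₁ t₂, t₁ ≠ t₂ ∧ IsChild T r t t₁ ∧ IsChild T r t t₂ ∧
    (∀ t'', IsChild T r t t'' → t'' = t₁ ∨ t'' = t₂) ∧ β t = β t₁ ∧ β t = β t₂

/-- A nice (rooted) tree decomposition. -/
def IsNice (T : SimpleGraph ι) (r : ι) (β : ι → Set V) : Prop :=
  β r = ∅ ∧ ∀ t, IsLeafNode T r β t ∨ (∃ w, IsForgetNode T r β w t) ∨
    (∃ w, IsIntroduceNode T r β w t) ∨ IsJoinNode T r β t

/-- `E(X)`: edges of `G` with both endpoints in `X`. -/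
def edgesIn (G : SimpleGraph V) (X : Set V) : Set (Sym2 V) :=
  {e | e ∈ G.edgeSet ∧ ∀ x ∈ e, x ∈ X}

end Defs

/-! Since `s ∉ W`, adding `s` to the bag of `t'` changes neither its part in `W` nor `γ` on `W`.
The only new clique `N(s) ∩ γ(t)` lies in `β(t')`: the bags containing `s` form a subtree
containing `t` but not `t'`, hence avoid the subtree below `t'`, while each edge at `s` lies in
some bag. So `t` and `t'` have the same derived bag, which lies in `W ∌ s`; hence adding `s` to
`β(t')` changes neither `Original` nor `Fake`. -/

section Development

open Walk

variable {V : Type*} {ι : Type*}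

lemma SimpleGraph.Walk.IsPath.eq_of_mem_takeUntil_of_mem_dropUntil {G : SimpleGraph V}
    [DecidableEq V] {a x u v : V} {p : G.Walk u v} (hp : p.IsPath) (ha : a ∈ p.support)
    (h₁ : x ∈ (p.takeUntil a ha).support) (h₂ : x ∈ (p.dropUntil a ha).support) : x = a := by
  have hnodup := hp.support_nodup
  rw [← p.take_spec ha, support_append] at hnodup
  rw [← (p.dropUntil a ha).cons_tail_support, List.mem_cons] at h₂
  exact h₂.resolve_right (List.disjoint_of_nodup_append hnodup h₁)

section Descendants

variable {T : SimpleGraph ι} {r : ι}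

lemma Desc.refl (t : ι) : Desc T r t t :=
  fun p _ => p.start_mem_support

lemma Desc.trans {a b c : ι} (hab : Desc T r a b) (hbc : Desc T r b c) : Desc T r a c := by
  classical
  intro p hp
  have hb : b ∈ p.support := hbc p hp
  exact p.support_dropUntil_subset_support hb (hab (p.dropUntil b hb) (hp.dropUntil hb))

lemma Desc.antisymm (hT : T.Connected) {a b : ι} (hab : Desc T r a b) (hba : Desc T r b a) :
    a = b := by
  classical
  obtain ⟨p, hp⟩ := (hT.preconnected b r).exists_isPath
  have ha : a ∈ p.support := hab p hp
  exact (hp.eq_of_mem_takeUntil_of_mem_dropUntil ha (p.takeUntil a ha).start_mem_support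
    (hba _ (hp.dropUntil ha))).symm

lemma Desc.mem_support_of_not_desc {t a b : ι} (ha : Desc T r t a)
    (hb : ¬ Desc T r t b) (w : T.Walk a b) : t ∈ w.support := by
  classical
  obtain ⟨q, hq, htq⟩ : ∃ q : T.Walk b r, q.IsPath ∧ t ∉ q.support := by
    simpa [Desc] using hb
  have ht := (w.append q).support_bypass_subset_support (ha _ (w.append q).bypass_isPath)
  exact ((mem_support_append_iff _ _).mp ht).resolve_right htq

lemma Desc.of_adj_of_isPath (hT : T.IsTree) {t c : ι} (hadj : T.Adj c t) {p : T.Walk t r}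
    (hp : p.IsPath) (hc : c ∉ p.support) : Desc T r t c := by
  intro q hq
  rw [(hT.existsUnique_path c r).unique hq (hp.cons hc (h := hadj))]
  simp

/-- The path from `x` to the root enters `t` from a child of `t`. -/
lemma Desc.eq_or_desc_of_forall_isChild_eq (hT : T.IsTree) {t t' x : ι}
    (huniq : ∀ u, IsChild T r t u → u = t') (hx : Desc T r t x) : x = t ∨ Desc T r t' x := by
  classical
  refine or_iff_not_imp_left.mpr fun hxt q hq => ?_
  have htq : t ∈ q.support := hx q hq
  set q₁ := q.takeUntil t htq
  have hq₁ : ¬ q₁.Nil := not_nil_of_ne hxt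
  have hc₁ : q₁.penultimate ∈ q₁.support := q₁.getVert_mem_support _
  have hct : q₁.penultimate ≠ t := (adj_penultimate hq₁).ne
  have hc : q₁.penultimate ∉ (q.dropUntil t htq).support := fun h =>
    hct (hq.eq_of_mem_takeUntil_of_mem_dropUntil htq hc₁ h)
  have hchild : IsChild T r t q₁.penultimate :=
    ⟨(adj_penultimate hq₁).symm,
      .of_adj_of_isPath hT (adj_penultimate hq₁) (hq.dropUntil htq) hc⟩
  rw [← huniq _ hchild]
  exact q.support_takeUntil_subset_support htq hc₁

lemma self_subset_gammaSet (β : ι → Set V) (t : ι) : β t ⊆ gammaSet T r β t :=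
  Set.subset_biUnion_of_mem (u := β) (Desc.refl t)

lemma gammaSet_eq_union_of_forall_isChild_eq (hT : T.IsTree) (β : ι → Set V) {t t' : ι}
    (huniq : ∀ u, IsChild T r t u → u = t') (ht' : IsChild T r t t') :
    gammaSet T r β t = β t ∪ gammaSet T r β t' := by
  ext v
  simp only [gammaSet, Set.mem_iUnion, Set.mem_ofPred_eq, Set.mem_union, exists_prop]
  constructor
  · rintro ⟨x, hx, hvx⟩
    rcases hx.eq_or_desc_of_forall_isChild_eq hT huniq with rfl | hx
    · exact .inl hvx
    · exact .inr ⟨x, hx, hvx⟩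
  · rintro (hv | ⟨x, hx, hvx⟩)
    · exact ⟨t, .refl t, hv⟩
    · exact ⟨x, ht'.2.trans hx, hvx⟩

end Descendants

section TreeDecomposition

variable {B : SimpleGraph V} {T : SimpleGraph ι} {r : ι} {β : ι → Set V}

lemma IsTreeDecompOn.mem_of_desc_of_not_desc (hD : IsTreeDecompOn B Set.univ T β) {t a b : ι}
    {v : V} (ha : Desc T r t a) (hb : ¬ Desc T r t b) (hva : v ∈ β a) (hvb : v ∈ β b) :
    v ∈ β t := by
  obtain ⟨w⟩ := (hD.conn v (Set.mem_univ v)).preconnected ⟨a, hva⟩ ⟨b, hvb⟩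
  have ht := ha.mem_support_of_not_desc hb (w.map ⟨Subtype.val, id⟩)
  rw [Walk.support_map, List.mem_map] at ht
  obtain ⟨⟨x, hx⟩, -, rfl⟩ := ht
  exact hx

end TreeDecomposition

section Bipartition

variable {B : SimpleGraph V} {W U : Set V}

lemma IsBipartition.notMem_left (hbip : IsBipartition B W U) {u : V} (hu : u ∈ U) : u ∉ W :=
  fun hw => hbip.2.1 u ⟨hw, hu⟩

lemma IsBipartition.mem_left_of_adj (hbip : IsBipartition B W U) {u v : V} (hu : u ∈ U)
    (huv : B.Adj u v) : v ∈ W :=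
  (hbip.2.2 huv).resolve_left (fun h => hbip.notMem_left hu h.1) |>.2

lemma mem_derivedBag {T : SimpleGraph ι} {r : ι} {β : ι → Set V} {t : ι} {v : V} :
    v ∈ derivedBag B W U T r β t ↔
      (v ∈ β t ∧ v ∈ W) ∨ ∃ u ∈ β t, u ∈ U ∧ B.Adj u v ∧ v ∈ gammaSet T r β t := by
  simp only [derivedBag, Set.mem_union, Set.mem_iUnion, Set.mem_inter_iff, mem_neighborSet,
    exists_prop, and_assoc]

lemma IsBipartition.derivedBag_subset (hbip : IsBipartition B W U) (T : SimpleGraph ι) (r : ι)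
    (β : ι → Set V) (t : ι) : derivedBag B W U T r β t ⊆ W := by
  intro v hv
  rcases mem_derivedBag.mp hv with ⟨-, hvW⟩ | ⟨u, -, huU, huv, -⟩
  · exact hvW
  · exact hbip.mem_left_of_adj huU huv

end Bipartition

namespace IsIntroduceNode

variable {B : SimpleGraph V} {T : SimpleGraph ι} {r : ι} {β : ι → Set V} {s : V} {t t' : ι}

lemma forall_isChild_eq (ht : IsIntroduceNode T r β s t) (ht' : IsChild T r t t') :
    ∀ u, IsChild T r t u → u = t' := by
  obtain ⟨t₀, -, huniq, -⟩ := ht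
  exact fun u hu => (huniq u hu).trans (huniq t' ht').symm

lemma bag_diff_eq (ht : IsIntroduceNode T r β s t) (ht' : IsChild T r t t') :
    β t \ {s} = β t' := by
  obtain ⟨t₀, -, huniq, -, hdiff⟩ := ht
  rw [hdiff, huniq t' ht']

lemma mem_bag (ht : IsIntroduceNode T r β s t) : s ∈ β t := by
  obtain ⟨-, -, -, hs, -⟩ := ht
  exact hs

lemma notMem_child (ht : IsIntroduceNode T r β s t) (ht' : IsChild T r t t') : s ∉ β t' := by
  simp [← ht.bag_diff_eq ht']

lemma bag_eq_insert (ht : IsIntroduceNode T r β s t) (ht' : IsChild T r t t') :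
    β t = insert s (β t') := by
  rw [← ht.bag_diff_eq ht', Set.insert_sdiff_singleton, Set.insert_eq_of_mem ht.mem_bag]

lemma notMem_of_desc (hT : T.IsTree) (hD : IsTreeDecompOn B Set.univ T β)
    (ht : IsIntroduceNode T r β s t) (ht' : IsChild T r t t') {x : ι} (hx : Desc T r t' x) :
    s ∉ β x := by
  have hnot : ¬ Desc T r t' t := fun h => ht'.1.ne (Desc.antisymm hT.connected ht'.2 h)
  exact fun hsx => ht.notMem_child ht' (hD.mem_of_desc_of_not_desc hx hnot hsx ht.mem_bag)

lemma mem_child_of_adj (hT : T.IsTree) (hD : IsTreeDecompOn B Set.univ T β)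
    (ht : IsIntroduceNode T r β s t) (ht' : IsChild T r t t') {v : V} (hsv : B.Adj s v)
    (hv : v ∈ gammaSet T r β t') : v ∈ β t' := by
  obtain ⟨x, hx, hvx⟩ : ∃ x, Desc T r t' x ∧ v ∈ β x := by
    simpa [gammaSet] using hv
  obtain ⟨y, hsy, hvy⟩ := hD.edge_mem hsv
  exact hD.mem_of_desc_of_not_desc hx (fun hy => ht.notMem_of_desc hT hD ht' hy hsy) hvx hvy

lemma gammaSet_eq_insert (hT : T.IsTree) (ht : IsIntroduceNode T r β s t)
    (ht' : IsChild T r t t') : gammaSet T r β t = insert s (gammaSet T r β t') := by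
  rw [gammaSet_eq_union_of_forall_isChild_eq hT β (ht.forall_isChild_eq ht') ht',
    ht.bag_eq_insert ht', Set.insert_union, Set.union_eq_right.mpr (self_subset_gammaSet β t')]

lemma derivedBag_eq {W U : Set V} (hbip : IsBipartition B W U) (hT : T.IsTree)
    (hD : IsTreeDecompOn B Set.univ T β) (hsU : s ∈ U) (ht : IsIntroduceNode T r β s t)
    (ht' : IsChild T r t t') : derivedBag B W U T r β t = derivedBag B W U T r β t' := by
  have hsW : s ∉ W := hbip.notMem_left hsU
  ext v
  simp only [mem_derivedBag, ht.bag_eq_insert ht', ht.gammaSet_eq_insert hT ht',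
    Set.mem_insert_iff]
  constructor
  · rintro (⟨rfl | hv, hvW⟩ | ⟨u, rfl | hu, huU, huv, hv⟩)
    · exact absurd hvW hsW
    · exact .inl ⟨hv, hvW⟩
    · have hvW := hbip.mem_left_of_adj huU huv
      refine .inl ⟨?_, hvW⟩
      rcases hv with rfl | hv
      · exact absurd hvW hsW
      · exact ht.mem_child_of_adj hT hD ht' huv hv
    · rcases hv with rfl | hv
      · exact absurd (hbip.mem_left_of_adj huU huv) hsW
      · exact .inr ⟨u, hu, huU, huv, hv⟩
  · rintro (⟨hv, hvW⟩ | ⟨u, hu, huU, huv, hv⟩)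
    · exact .inl ⟨.inr hv, hvW⟩
    · exact .inr ⟨u, .inr hu, huU, huv, .inr hv⟩

end IsIntroduceNode

end Development

theorem stmt_2_general {V : Type*} {ι : Type*} (B : SimpleGraph V) (W U : Set V)
    (hbip : IsBipartition B W U)
    (T : SimpleGraph ι) (r : ι) (hT : T.IsTree) (β : ι → Set V)
    (hD : IsTreeDecompOn B Set.univ T β)
    (s : V) (hsU : s ∈ U) (t t' : ι)
    (ht : IsIntroduceNode T r β s t) (ht' : IsChild T r t t') :
    originalSet B W U T r β t = originalSet B W U T r β t' ∧
      fakeSet B W U T r β t = fakeSet B W U T r β t' := by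
  have hderived := ht.derivedBag_eq hbip hT hD hsU ht'
  have hs : s ∉ derivedBag B W U T r β t' := fun h =>
    hbip.notMem_left hsU (hbip.derivedBag_subset T r β t' h)
  refine ⟨?_, ?_⟩
  · rw [originalSet, originalSet, hderived, ht.bag_eq_insert ht', Set.insert_inter_of_notMem hs]
  · rw [fakeSet, fakeSet, hderived, ht.bag_eq_insert ht', Set.sdiff_insert_of_notMem hs]

/-- at an introduce(s) node `t` (for a special vertex `s ∈ U`)
with unique child `t'`, `Original(t) = Original(t')` and `Fake(t) = Fake(t')`. -/
theorem stmt_2 {V : Type*} {ι : Type*} (B : SimpleGraph V) (W U : Set V)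
    (hbip : IsBipartition B W U)
    (T : SimpleGraph ι) (r : ι) (hT : T.IsTree) (β : ι → Set V)
    (hD : IsTreeDecompOn B Set.univ T β) (hnice : IsNice T r β)
    (s : V) (hsU : s ∈ U) (t t' : ι)
    (ht : IsIntroduceNode T r β s t) (ht' : IsChild T r t t') :
    originalSet B W U T r β t = originalSet B W U T r β t' ∧
      fakeSet B W U T r β t = fakeSet B W U T r β t' :=
  stmt_2_general B W U hbip T r hT β hD s hsU t t' ht ht'
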